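/- Let M=(S,A,P) be an RMDP, T ⊆ S, and let p_A > 0 be a constant such that for all s ∈ S and B ⊆ S for which force_A(s,B) holds, there is an action a ∈ A(s) with δ[B] ≥ p_A for every δ ∈ P(s,a). Let T₀ = T and T_{i+1} = T_i ∪ {s ∈ S : force_A(s,T_i)}. Then for every i ∈ ℕ and every s ∈ T_i there exists a pure memoryless agent policy σ with Val^{s,σ}_M(Reach(T)) ≥ p_A^i. -/

import Mathlib

open scoped BigOperators Classical

/-- A robust MDP over finite state set `S` and finite action set `A`.
Distributions are represented as real-valued probability vectors `S → ℝ`. -/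
structure RMDP (S A : Type) [Fintype S] [Fintype A] where
  /-- available actions at each state -/
  Act : S → Finset A
  Act_nonempty : ∀ s, (Act s).Nonempty
  /-- the uncertainty sets -/
  P : S → A → Set (S → ℝ)
  P_prob : ∀ s, ∀ a ∈ Act s, ∀ p ∈ P s a, (∀ t, 0 ≤ p t) ∧ ∑ t, p t = 1
  P_nonempty : ∀ s, ∀ a ∈ Act s, (P s a).Nonempty
  P_compact : ∀ s, ∀ a ∈ Act s, IsCompact (P s a)

variable {S A : Type} [Fintype S] [Nonempty S] [Fintype A]

/-- An agent policy: given a history and the current state, a probability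
distribution over the available actions. -/
structure AgentPolicy (M : RMDP S A) where
  toFun : List (S × A) → S → A → ℝ
  nonneg : ∀ h s a, 0 ≤ toFun h s a
  sum_one : ∀ h s, ∑ a, toFun h s a = 1
  mem_act : ∀ h s a, toFun h s a ≠ 0 → a ∈ M.Act s

/-- An environment policy: given a history, the current state and the chosen
action, a distribution from the uncertainty set. -/
structure EnvPolicy (M : RMDP S A) where
  toFun : List (S × A) → S → A → S → ℝ
  mem : ∀ h s, ∀ a ∈ M.Act s, toFun h s a ∈ M.P s a

/-- A pure memoryless agent policy deterministically picks an action
depending only on the current state. -/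
def AgentPolicy.PureMemoryless {M : RMDP S A} (σ : AgentPolicy M) : Prop :=
  ∃ f : S → A, ∀ h s a, σ.toFun h s a = if a = f s then 1 else 0

/-- A pure memoryless environment policy picks the transition distribution
depending only on the current state and action. -/
def EnvPolicy.PureMemoryless {M : RMDP S A} (ρ : EnvPolicy M) : Prop :=
  ∃ g : S → A → S → ℝ, ∀ h s a, ρ.toFun h s a = g s a

/-- Probability, under policies `σ, ρ`, of reaching the target `T` within `k`
steps, starting from state `s` with history `h`. -/
noncomputable def reachK (M : RMDP S A) (σ : AgentPolicy M) (ρ : EnvPolicy M) (T : Set S) :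
    ℕ → List (S × A) → S → ℝ
  | 0, _, s => if s ∈ T then 1 else 0
  | k + 1, h, s =>
      if s ∈ T then 1
      else ∑ a, σ.toFun h s a * ∑ t, ρ.toFun h s a t * reachK M σ ρ T k (h ++ [(s, a)]) t

/-- `ℙ^{σ,ρ}_M(s)[Reach(T)]`: the probability of eventually reaching `T`,
which is the supremum over `k` of the probabilities of reaching `T` within `k` steps. -/
noncomputable def reachProb (M : RMDP S A) (σ : AgentPolicy M) (ρ : EnvPolicy M)
    (T : Set S) (s : S) : ℝ :=
  ⨆ k : ℕ, reachK M σ ρ T k [] s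

/-- `Val^{s,σ}_M(Reach(T)) = inf_ρ ℙ^{σ,ρ}_M(s)[Reach(T)]`. -/
noncomputable def reachVal (M : RMDP S A) (σ : AgentPolicy M) (T : Set S) (s : S) : ℝ :=
  ⨅ ρ : EnvPolicy M, reachProb M σ ρ T s

/-- `Val^{s}_M(Reach(T)) = sup_σ inf_ρ ℙ^{σ,ρ}_M(s)[Reach(T)]`. -/
noncomputable def reachValSup (M : RMDP S A) (T : Set S) (s : S) : ℝ :=
  ⨆ σ : AgentPolicy M, reachVal M σ T s

/-- `force_A(s,B)`: the agent has an action that reaches `B` with positive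
probability no matter which distribution the environment picks. -/
def forceA (M : RMDP S A) (s : S) (B : Set S) : Prop :=
  ∃ a ∈ M.Act s, ∀ p ∈ M.P s a, 0 < ∑ t, B.indicator p t

/-- `force_E(s,B)`: whatever action the agent picks, the environment can pick a
distribution reaching `B` with positive probability. -/
def forceE (M : RMDP S A) (s : S) (B : Set S) : Prop :=
  ∀ a ∈ M.Act s, ∃ p ∈ M.P s a, 0 < ∑ t, B.indicator p t

/-- The increasing sequence `T₀ = T`, `T_{i+1} = T_i ∪ {s | force_A(s, T_i)}`. -/
def attrSeqA (M : RMDP S A) (T : Set S) : ℕ → Set S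
  | 0 => T
  | i + 1 => attrSeqA M T i ∪ {s | forceA M s (attrSeqA M T i)}

/-- The positive attractor of the agent. -/
def PAttrA (M : RMDP S A) (T : Set S) : Set S := ⋃ i, attrSeqA M T i

/-- The increasing sequence `T₀ = T`, `T_{i+1} = T_i ∪ {s | force_E(s, T_i)}`. -/
def attrSeqE (M : RMDP S A) (T : Set S) : ℕ → Set S
  | 0 => T
  | i + 1 => attrSeqE M T i ∪ {s | forceE M s (attrSeqE M T i)}

/-- The positive attractor of the environment. -/
def PAttrE (M : RMDP S A) (T : Set S) : Set S := ⋃ i, attrSeqE M T i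


/-!
At a state that first enters the attractor at level `j + 1`, the agent plays an action which,
whatever distribution the environment picks, moves to `T_j` with probability at least `p_A`.
Because the `T_j` increase, such an action chosen at the first level of a state serves every
later level too, so a single memoryless choice works. Induction on `j` then shows that from
`T_j` the target is reached within `j` steps with probability at least `p_A ^ j` against every
environment policy.
-/

open Finset

section Development

variable {S A : Type} [Fintype S] [Fintype A]

lemma attrSeqA_monotone (M : RMDP S A) (T : Set S) : Monotone (attrSeqA M T) :=
  monotone_nat_of_le_succ fun _ => Set.subset_union_left

instance EnvPolicy.instNonempty (M : RMDP S A) : Nonempty (EnvPolicy M) := by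
  classical
  exact ⟨⟨fun _ s a => if h : a ∈ M.Act s then (M.P_nonempty s a h).choose else 0,
    fun _ s a ha => by simpa only [dif_pos ha] using (M.P_nonempty s a ha).choose_spec⟩⟩

lemma sum_mul_mem_Icc_of_sum_eq_one {ι : Type*} [Fintype ι] {p v : ι → ℝ}
    (hp : ∀ t, 0 ≤ p t) (hsum : ∑ t, p t = 1)
    (hv : ∀ t, p t ≠ 0 → v t ∈ Set.Icc (0 : ℝ) 1) :
    ∑ t, p t * v t ∈ Set.Icc (0 : ℝ) 1 := by
  have hterm : ∀ t, 0 ≤ p t * v t ∧ p t * v t ≤ p t := fun t => by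
    by_cases ht : p t = 0
    · simp [ht]
    · obtain ⟨hv0, hv1⟩ := hv t ht
      exact ⟨mul_nonneg (hp t) hv0, mul_le_of_le_one_right (hp t) hv1⟩
  exact ⟨sum_nonneg fun t _ => (hterm t).1, hsum ▸ sum_le_sum fun t _ => (hterm t).2⟩

section Reach

variable {M : RMDP S A} {T : Set S}

lemma reachK_of_mem (σ : AgentPolicy M) (ρ : EnvPolicy M) {s : S} (hs : s ∈ T) (k : ℕ)
    (h : List (S × A)) : reachK M σ ρ T k h s = 1 := by
  cases k <;> simp [reachK, hs]

lemma reachK_mem_Icc (σ : AgentPolicy M) (ρ : EnvPolicy M) (k : ℕ) (h : List (S × A)) (s : S) :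
    reachK M σ ρ T k h s ∈ Set.Icc (0 : ℝ) 1 := by
  induction k generalizing h s with
  | zero => unfold reachK; split_ifs <;> simp
  | succ k ih =>
    unfold reachK
    split_ifs
    · simp
    refine sum_mul_mem_Icc_of_sum_eq_one (σ.nonneg h s) (σ.sum_one h s) fun a ha => ?_
    have hact := σ.mem_act h s a ha
    obtain ⟨hp, hsum⟩ := M.P_prob s a hact _ (ρ.mem h s a hact)
    exact sum_mul_mem_Icc_of_sum_eq_one hp hsum fun t _ => ih _ t

lemma reachK_le_reachProb (σ : AgentPolicy M) (ρ : EnvPolicy M) (k : ℕ) (s : S) :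
    reachK M σ ρ T k [] s ≤ reachProb M σ ρ T s :=
  le_ciSup (f := fun k => reachK M σ ρ T k [] s)
    ⟨1, by rintro _ ⟨k, rfl⟩; exact (reachK_mem_Icc σ ρ k [] s).2⟩ k

noncomputable def AgentPolicy.pure (f : S → A) (hf : ∀ s, f s ∈ M.Act s) : AgentPolicy M where
  toFun _ s a := if a = f s then 1 else 0
  nonneg _ _ _ := by split_ifs <;> norm_num
  sum_one _ _ := by simp
  mem_act _ s a h := by
    split_ifs at h with ha
    · exact ha ▸ hf s
    · exact absurd rfl h

lemma AgentPolicy.pure_pureMemoryless (f : S → A) (hf : ∀ s, f s ∈ M.Act s) :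
    (AgentPolicy.pure f hf).PureMemoryless :=
  ⟨f, fun _ _ _ => rfl⟩

lemma reachK_pure_succ_of_notMem (f : S → A) (hf : ∀ s, f s ∈ M.Act s) (ρ : EnvPolicy M)
    (k : ℕ) (h : List (S × A)) {s : S} (hs : s ∉ T) :
    reachK M (.pure f hf) ρ T (k + 1) h s =
      ∑ t, ρ.toFun h s (f s) t * reachK M (.pure f hf) ρ T k (h ++ [(s, f s)]) t := by
  simp [reachK, hs, AgentPolicy.pure]

end Reach

section Attractor

variable {M : RMDP S A} {T : Set S} {pA : ℝ}

lemma le_one_of_forceA_bound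
    (hforce : ∀ (s : S) (B : Set S), forceA M s B →
      ∃ a ∈ M.Act s, ∀ p ∈ M.P s a, pA ≤ ∑ t, B.indicator p t) (s : S) : pA ≤ 1 := by
  obtain ⟨a₀, ha₀⟩ := M.Act_nonempty s
  have huniv : forceA M s Set.univ :=
    ⟨a₀, ha₀, fun p hp => by simp [(M.P_prob s a₀ ha₀ p hp).2]⟩
  obtain ⟨a, ha, hle⟩ := hforce s Set.univ huniv
  obtain ⟨p, hp⟩ := M.P_nonempty s a ha
  simpa [(M.P_prob s a ha p hp).2] using hle p hp

structure IsAttractorAction (M : RMDP S A) (T : Set S) (pA : ℝ) (s : S) (a : A) : Prop where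
  mem_act : a ∈ M.Act s
  le_sum_indicator : ∀ j, s ∈ attrSeqA M T (j + 1) → s ∉ T →
    ∀ p ∈ M.P s a, pA ≤ ∑ t, (attrSeqA M T j).indicator p t

lemma exists_isAttractorAction
    (hforce : ∀ (s : S) (B : Set S), forceA M s B →
      ∃ a ∈ M.Act s, ∀ p ∈ M.P s a, pA ≤ ∑ t, B.indicator p t) (s : S) :
    ∃ a, IsAttractorAction M T pA s a := by
  classical
  by_cases hlevel : s ∉ T ∧ ∃ n, s ∈ attrSeqA M T (n + 1)
  · obtain ⟨hsT, hex⟩ := hlevel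
    have hnot : s ∉ attrSeqA M T (Nat.find hex) := by
      rcases hm : Nat.find hex with _ | m
      · exact hsT
      · exact Nat.find_min hex (by omega)
    obtain ⟨a, ha, hle⟩ := hforce s _ ((Nat.find_spec hex).resolve_left hnot)
    refine ⟨a, ha, fun j hj _ p hp => (hle p hp).trans (sum_le_sum fun t _ => ?_)⟩
    exact Set.indicator_le_indicator_of_subset
      (attrSeqA_monotone M T (Nat.find_min' hex hj)) (M.P_prob s a ha p hp).1 t
  · obtain ⟨a, ha⟩ := M.Act_nonempty s
    exact ⟨a, ha, fun j hj hsT => absurd ⟨hsT, j, hj⟩ hlevel⟩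

lemma pow_le_reachK_of_mem_attrSeqA (hpA : 0 ≤ pA) (hpA1 : pA ≤ 1) {f : S → A}
    (hf : ∀ s, IsAttractorAction M T pA s (f s)) (ρ : EnvPolicy M) (j : ℕ) (h : List (S × A))
    {s : S} (hs : s ∈ attrSeqA M T j) :
    pA ^ j ≤ reachK M (.pure f fun s => (hf s).mem_act) ρ T j h s := by
  induction j generalizing h s with
  | zero => rw [reachK_of_mem _ _ (show s ∈ T from hs)]; simp
  | succ j ih =>
    by_cases hsT : s ∈ T
    · rw [reachK_of_mem _ _ hsT]
      exact pow_le_one₀ hpA hpA1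
    rw [reachK_pure_succ_of_notMem _ _ _ _ _ hsT]
    set p := ρ.toFun h s (f s)
    have hp : p ∈ M.P s (f s) := ρ.mem h s (f s) (hf s).mem_act
    have hp0 := (M.P_prob s (f s) (hf s).mem_act p hp).1
    calc pA ^ (j + 1) = pA * pA ^ j := pow_succ' pA j
      _ ≤ (∑ t, (attrSeqA M T j).indicator p t) * pA ^ j :=
        mul_le_mul_of_nonneg_right ((hf s).le_sum_indicator j hs hsT p hp) (pow_nonneg hpA j)
      _ = ∑ t, (attrSeqA M T j).indicator p t * pA ^ j := sum_mul _ _ _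
      _ ≤ _ := sum_le_sum fun t _ => by
        by_cases ht : t ∈ attrSeqA M T j
        · rw [Set.indicator_of_mem ht]
          exact mul_le_mul_of_nonneg_left (ih _ ht) (hp0 t)
        · rw [Set.indicator_of_notMem ht, zero_mul]
          exact mul_nonneg (hp0 t) (reachK_mem_Icc _ _ _ _ t).1

end Attractor

end Development

theorem stmt3 (M : RMDP S A) (T : Set S) (pA : ℝ) (hpA : 0 < pA)
    (hforce : ∀ (s : S) (B : Set S), forceA M s B →
      ∃ a ∈ M.Act s, ∀ p ∈ M.P s a, pA ≤ ∑ t, B.indicator p t)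
    (i : ℕ) (s : S) (hs : s ∈ attrSeqA M T i) :
    ∃ σ : AgentPolicy M, σ.PureMemoryless ∧ pA ^ i ≤ reachVal M σ T s := by
  choose f hf using exists_isAttractorAction (T := T) hforce
  refine ⟨.pure f fun s => (hf s).mem_act, AgentPolicy.pure_pureMemoryless _ _,
    le_ciInf fun ρ => ?_⟩
  exact (pow_le_reachK_of_mem_attrSeqA hpA.le (le_one_of_forceA_bound hforce s) hf ρ i [] hs).trans
    (reachK_le_reachProb _ ρ i s)
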